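/- Let U be a nonempty compact metric space and F : [t, T] × ℝ × U → ℝ continuous, Lipschitz in the second variable uniformly in (s, a). For a measurable control u : [t, T] → U, let Y^u denote the solution of the backward ODE (Y^u)'(s) = −F(s, Y^u(s), u(s)) with Y^u(T) = 0, and let Y⁰ solve (Y⁰)'(s) = −F₀(s, Y⁰(s)) with Y⁰(T) = 0, where F₀(s, y) = inf_{a∈U} F(s, y, a). Then inf over all measurable controls u of Y^u(t) equals Y⁰(t). -/

import Mathlib

/-!
For any control `u`, the difference `D = Y - Y0` satisfies `D' ≤ L |D|` on `[t, T]` (the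
infimum is at most the value at `u s`, and `F` is `L`-Lipschitz in `y`) and `D T = 0`; running
time backwards, a Gronwall-type fencing argument gives `D ≥ 0`, so `Y0 t` is a lower bound.
It is attained: a measurable selection `u s ∈ argmin_a F s (Y0 s) a` makes `Y0` itself an
admissible trajectory. Such selections exist for closed sets with compact sections: pull back
along a continuous surjection from the Cantor space and pick in each section the point where the
(injective, continuous) Cantor function is smallest; this minimum is lower semicontinuous, hence
measurable.
-/

open Set Function

theorem image_nonpos_of_deriv_right_le_mul_abs {f f' : ℝ → ℝ} {a b L : ℝ}
    (hf : ContinuousOn f (Icc a b)) (hf' : ∀ x ∈ Ico a b, HasDerivWithinAt f (f' x) (Ici x) x)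
    (ha : f a ≤ 0) (bound : ∀ x ∈ Ico a b, f' x ≤ L * |f x|) :
    ∀ ⦃x⦄, x ∈ Icc a b → f x ≤ 0 := by
  intro x hx
  refine le_of_forall_pos_le_add fun δ hδ => ?_
  -- `δ e^{(L+1)(y-x)}` is a fence: where `f` touches it, `f' ≤ L |f|` is below its slope
  set B : ℝ → ℝ := fun y => δ * Real.exp ((L + 1) * (y - x))
  have hB_pos : ∀ y, 0 < B y := fun y => by positivity
  have hB : ∀ y, HasDerivAt B ((L + 1) * B y) y := fun y =>
    ((((hasDerivAt_id' y).sub_const x).const_mul (L + 1)).exp.const_mul δ).congr_deriv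
      (by simp only [B]; ring)
  have := image_le_of_deriv_right_lt_deriv_boundary hf hf' (ha.trans (hB_pos a).le) hB
    (fun y hy hfy => by
      calc f' y ≤ L * |f y| := bound y hy
        _ = L * B y := by rw [hfy, abs_of_pos (hB_pos y)]
        _ < (L + 1) * B y := by linarith [hB_pos y]) hx
  simpa [B] using this

theorem nonneg_of_hasDerivAt_le_mul_abs {g g' : ℝ → ℝ} {a b L : ℝ}
    (hg : ∀ x ∈ Icc a b, HasDerivAt g (g' x) x) (hb : 0 ≤ g b)
    (bound : ∀ x ∈ Icc a b, g' x ≤ L * |g x|) : ∀ x ∈ Icc a b, 0 ≤ g x := by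
  have hneg_mem : ∀ {y}, y ∈ Icc (-b) (-a) → -y ∈ Icc a b := fun hy =>
    ⟨by linarith [hy.2], by linarith [hy.1]⟩
  have hrev : ∀ y ∈ Icc (-b) (-a), HasDerivAt (fun y => -g (-y)) (g' (-y)) y := fun y hy =>
    (((hg (-y) (hneg_mem hy)).comp y (hasDerivAt_neg y)).neg).congr_deriv (by ring)
  intro x hx
  have := image_nonpos_of_deriv_right_le_mul_abs (f := fun y => -g (-y)) (L := L)
    (fun y hy => (hrev y hy).continuousAt.continuousWithinAt)
    (fun y hy => (hrev y (Ico_subset_Icc_self hy)).hasDerivWithinAt) (by simpa using hb)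
    (fun y hy => by simpa using bound (-y) (hneg_mem (Ico_subset_Icc_self hy)))
    (x := -x) ⟨by linarith [hx.2], by linarith [hx.1]⟩
  simpa using this

theorem Cardinal.continuous_cantorFunction {c : ℝ} (h1 : 0 ≤ c) (h2 : c < 1) :
    Continuous (cantorFunction c) := by
  refine continuous_tsum (u := (c ^ ·)) (fun n => ?_) (summable_geometric_of_lt_one h1 h2)
    (fun n f => ?_)
  · exact (continuous_of_discreteTopology (f := fun b : Bool => cond b (c ^ n) 0)).comp
      (continuous_apply n)
  · cases hfn : f n <;> simp [cantorFunctionAux, hfn, abs_of_nonneg h1, pow_nonneg h1]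

section MeasurableSelection

variable {X : Type*} [TopologicalSpace X] [MeasurableSpace X] [OpensMeasurableSpace X]

theorem exists_measurable_selection_of_continuous_injective {V : Type*} [TopologicalSpace V]
    [CompactSpace V] [MeasurableSpace V] [BorelSpace V] [Nonempty V] {ι : V → ℝ}
    (hι : Continuous ι) (hι_inj : Injective ι) {K : Set (X × V)} (hK : IsClosed K)
    (hne : ∀ x, ∃ v, (x, v) ∈ K) :
    ∃ u : X → V, Measurable u ∧ ∀ x, (x, u x) ∈ K := by
  obtain ⟨ι', hι'_meas, hι'⟩ :=
    (hι.isClosedEmbedding hι_inj).measurableEmbedding.exists_measurable_extend measurable_id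
      fun _ => inferInstance
  have hsec : ∀ x, IsCompact (ι '' {v | (x, v) ∈ K}) := fun x =>
    ((hK.preimage (Continuous.prodMk_right x)).isCompact).image hι
  set m : X → ℝ := fun x => sInf (ι '' {v | (x, v) ∈ K})
  have hm_mem : ∀ x, m x ∈ ι '' {v | (x, v) ∈ K} := fun x =>
    (hsec x).sInf_mem (Set.Nonempty.image ι (hne x))
  have hm_le : ∀ r, m ⁻¹' Iic r = Prod.fst '' (K ∩ {p | ι p.2 ≤ r}) := by
    intro r
    ext x
    constructor
    · intro hx
      obtain ⟨v, hv, hvx⟩ := hm_mem x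
      exact ⟨(x, v), ⟨hv, hvx.trans_le hx⟩, rfl⟩
    · rintro ⟨⟨x, v⟩, ⟨hv, hvr⟩, rfl⟩
      exact (csInf_le (hsec x).bddBelow (mem_image_of_mem ι hv)).trans hvr
  have hm_meas : Measurable m := measurable_of_Iic fun r => by
    rw [hm_le r]
    exact (isClosedMap_fst_of_compactSpace _ (hK.inter (isClosed_le (hι.comp continuous_snd)
      continuous_const))).measurableSet
  refine ⟨ι' ∘ m, hι'_meas.comp hm_meas, fun x => ?_⟩
  obtain ⟨v, hv, hvx⟩ := hm_mem x
  show (x, ι' (m x)) ∈ K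
  rwa [← hvx, show ι' (ι v) = v from congrFun hι' v]

variable {U : Type*} [MetricSpace U] [CompactSpace U] [Nonempty U] [MeasurableSpace U]
  [BorelSpace U]

theorem exists_measurable_selection {K : Set (X × U)} (hK : IsClosed K)
    (hne : ∀ x, ∃ a, (x, a) ∈ K) :
    ∃ u : X → U, Measurable u ∧ ∀ x, (x, u x) ∈ K := by
  obtain ⟨φ, hφ, hφ_surj⟩ := exists_nat_bool_continuous_surjective_of_compact U
  obtain ⟨c, hc, hcK⟩ := exists_measurable_selection_of_continuous_injective
    (Cardinal.continuous_cantorFunction (c := 1 / 3) (by norm_num) (by norm_num))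
    (Cardinal.cantorFunction_injective (by norm_num) (by norm_num))
    (hK.preimage (continuous_fst.prodMk (hφ.comp continuous_snd)))
    fun x => (hne x).imp' (invFun φ) fun a ha => by simpa [rightInverse_invFun hφ_surj a] using ha
  exact ⟨φ ∘ c, hφ.measurable.comp hc, hcK⟩

theorem exists_measurable_forall_le {g : X → U → ℝ} (hg : Continuous ↿g) :
    ∃ u : X → U, Measurable u ∧ ∀ x b, g x (u x) ≤ g x b := by
  have hK : IsClosed {p : X × U | ∀ b, g p.1 p.2 ≤ g p.1 b} := by
    simp only [ofPred_forall]
    exact isClosed_iInter fun b =>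
      isClosed_le hg (hg.comp (continuous_fst.prodMk continuous_const))
  refine exists_measurable_selection hK fun x => ?_
  obtain ⟨a, -, ha⟩ := isCompact_univ.exists_isMinOn univ_nonempty
    (hg.comp (Continuous.prodMk_right x)).continuousOn
  exact ⟨a, fun b => ha (mem_univ b)⟩

end MeasurableSelection

theorem inf_control_backward_ode (t T : ℝ) (htT : t ≤ T)
    {U : Type*} [MetricSpace U] [CompactSpace U] [Nonempty U]
    [MeasurableSpace U] [BorelSpace U]
    (F : ℝ → ℝ → U → ℝ)
    (hFcont : Continuous fun p : ℝ × ℝ × U => F p.1 p.2.1 p.2.2)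
    (hFLip : ∃ L : ℝ, ∀ (s : ℝ) (a : U), ∀ y y' : ℝ,
      |F s y a - F s y' a| ≤ L * |y - y'|)
    (Y0 : ℝ → ℝ)
    (hY0 : ∀ s ∈ Set.Icc t T, HasDerivAt Y0 (-(⨅ a : U, F s (Y0 s) a)) s)
    (hY0T : Y0 T = 0) :
    IsGLB {x : ℝ | ∃ u : ℝ → U, Measurable u ∧ ∃ Y : ℝ → ℝ,
        (∀ s ∈ Set.Icc t T, HasDerivAt Y (-(F s (Y s) (u s))) s) ∧
        Y T = 0 ∧ x = Y t}
      (Y0 t) := by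
  obtain ⟨L, hL⟩ := hFLip
  have hbdd : ∀ s y, BddBelow (range (F s y)) := fun s y =>
    (isCompact_range (by fun_prop : Continuous (F s y))).bddBelow
  refine ⟨?_, fun c hc => hc ?_⟩
  · rintro _ ⟨u, -, Y, hY, hYT, rfl⟩
    have hderiv : ∀ s ∈ Icc t T, HasDerivAt (fun s => Y s - Y0 s)
        (-F s (Y s) (u s) + ⨅ a, F s (Y0 s) a) s := fun s hs =>
      ((hY s hs).sub (hY0 s hs)).congr_deriv (by ring)
    have hslope : ∀ s ∈ Icc t T, -F s (Y s) (u s) + ⨅ a, F s (Y0 s) a ≤ L * |Y s - Y0 s| :=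
      fun s hs => by
        have hinf := ciInf_le (hbdd s (Y0 s)) (u s)
        have hLip := hL s (u s) (Y s) (Y0 s)
        linarith [neg_abs_le (F s (Y s) (u s) - F s (Y0 s) (u s))]
    have hD :=
      nonneg_of_hasDerivAt_le_mul_abs hderiv (by simp [hYT, hY0T]) hslope t ⟨le_rfl, htT⟩
    linarith
  · have hY0c : Continuous fun s => Y0 (projIcc t T htT s) :=
      ContinuousOn.comp_continuous (fun s hs => (hY0 s hs).continuousAt.continuousWithinAt)
        (continuous_subtype_val.comp continuous_projIcc) fun s => (projIcc t T htT s).2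
    obtain ⟨u, hu, hmin⟩ :=
      exists_measurable_forall_le (g := fun s a => F s (Y0 (projIcc t T htT s)) a) (hFcont.comp
        (continuous_fst.prodMk ((hY0c.comp continuous_fst).prodMk continuous_snd)))
    refine ⟨u, hu, Y0, fun s hs => ?_, hY0T, rfl⟩
    have hus : ∀ b, F s (Y0 s) (u s) ≤ F s (Y0 s) b := by
      simpa [projIcc_of_mem htT hs] using hmin s
    rw [le_antisymm (le_ciInf hus) (ciInf_le (hbdd s (Y0 s)) (u s))]
    exact hY0 s hs
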